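/- arXiv:2603.28758 — 3 statements merged into one kernel-verified Lean document; each statement's English description precedes it below -/
import Mathlib

section
/- Let (𝒴, d) be a metric space, C ⊆ 𝒴 a nonempty closed set, γ ≥ 0, p ≥ 1 a real number, and ȳ ∈ 𝒴. Then sup_{y ∈ 𝒴} { 1_C(y) − γ·d(y, ȳ)^p } = max(1 − γ·dist(ȳ, C)^p, 0), where 1_C is the indicator function of C and dist(ȳ, C) = inf_{c ∈ C} d(ȳ, c). -/
/-!
Every point outside `C` contributes at most `0`, and a point `c ∈ C` contributes
`1 - γ * dist c ȳ ^ p ≤ 1 - γ * dist(ȳ, C) ^ p` because `t ↦ γ * t ^ p` is monotone on `[0, ∞)`.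
Both bounds are approached: `ȳ` itself contributes at least `0`, and points of `C` with
`dist c ȳ` close to `dist(ȳ, C)` contribute nearly `1 - γ * dist(ȳ, C) ^ p`, by continuity
of `t ↦ γ * t ^ p`.
-/

open Set

theorem Metric.exists_mem_lt_of_continuousAt_infDist {X : Type*} [PseudoMetricSpace X]
    {s : Set X} (hs : s.Nonempty) (x : X) {φ : ℝ → ℝ} {a : ℝ}
    (hφ : ContinuousAt φ (infDist x s)) (ha : φ (infDist x s) < a) :
    ∃ y ∈ s, φ (dist x y) < a := by
  obtain ⟨δ, hδ, hnear⟩ := Metric.eventually_nhds_iff.mp (hφ.eventually_lt continuousAt_const ha)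
  obtain ⟨y, hys, hy⟩ := (infDist_lt_iff hs).mp (lt_add_of_pos_right (infDist x s) hδ)
  refine ⟨y, hys, hnear ?_⟩
  rw [Real.dist_eq, abs_of_nonneg (sub_nonneg.mpr (infDist_le_dist_of_mem hys))]
  linarith

theorem indicator_one_sub_mul_rpow_dist_le {Y : Type*} [PseudoMetricSpace Y] (C : Set Y)
    {γ p : ℝ} (hγ : 0 ≤ γ) (hp : 0 ≤ p) (y y₀ : Y) :
    C.indicator (fun _ => (1 : ℝ)) y - γ * dist y y₀ ^ p
      ≤ max (1 - γ * Metric.infDist y₀ C ^ p) 0 := by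
  by_cases hy : y ∈ C
  · have hinf : Metric.infDist y₀ C ≤ dist y y₀ :=
      dist_comm y y₀ ▸ Metric.infDist_le_dist_of_mem hy
    have := Real.rpow_le_rpow Metric.infDist_nonneg hinf hp
    rw [indicator_of_mem hy]
    exact le_max_of_le_left (by nlinarith)
  · rw [indicator_of_notMem hy]
    exact le_max_of_le_right (by nlinarith [Real.rpow_nonneg (dist_nonneg (x := y) (y := y₀)) p])

theorem stmt0_general {Y : Type*} [MetricSpace Y] (C : Set Y) (hC : C.Nonempty)
    (γ p : ℝ) (hγ : 0 ≤ γ) (hp : 1 ≤ p) (y₀ : Y) :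
    (⨆ y : Y, (C.indicator (fun _ => (1 : ℝ)) y - γ * dist y y₀ ^ p))
      = max (1 - γ * Metric.infDist y₀ C ^ p) 0 := by
  have hp₀ : 0 < p := zero_lt_one.trans_le hp
  have : Nonempty Y := ⟨hC.some⟩
  refine ciSup_eq_of_forall_le_of_forall_lt_exists_gt
    (indicator_one_sub_mul_rpow_dist_le C hγ hp₀.le · y₀) fun w hw => ?_
  rcases lt_max_iff.mp hw with hw | hw
  · have hcont : ContinuousAt (fun t : ℝ => γ * t ^ p) (Metric.infDist y₀ C) :=
      continuousAt_const.mul (Real.continuousAt_rpow_const _ _ (Or.inr hp₀.le))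
    obtain ⟨c, hc, hlt⟩ :=
      Metric.exists_mem_lt_of_continuousAt_infDist hC y₀ hcont (lt_sub_comm.mp hw)
    refine ⟨c, ?_⟩
    rw [indicator_of_mem hc, dist_comm]
    linarith
  · refine ⟨y₀, ?_⟩
    rw [dist_self, Real.zero_rpow hp₀.ne', mul_zero, sub_zero]
    exact hw.trans_le (indicator_nonneg (fun _ _ => zero_le_one) y₀)

/-- dual inner supremum for the indicator of a closed set. -/
theorem stmt0 {Y : Type*} [MetricSpace Y] (C : Set Y) (hC : C.Nonempty)
    (hCclosed : IsClosed C) (γ p : ℝ) (hγ : 0 ≤ γ) (hp : 1 ≤ p) (y₀ : Y) :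
    (⨆ y : Y, (C.indicator (fun _ => (1 : ℝ)) y - γ * dist y y₀ ^ p))
      = max (1 - γ * Metric.infDist y₀ C ^ p) 0 :=
  stmt0_general C hC γ p hγ hp y₀
end

section
/- Let C ∈ ℝ^{k×n} have orthonormal rows, let S ⊆ ℝ^k be a nonempty closed set, and define the lifted unsafe set 𝒞 = { (x, z) ∈ ℝ^n × ℝ^k : C x − z ∈ S }. Then for every (x, z) ∈ ℝ^n × ℝ^k, the Euclidean distance in ℝ^n × ℝ^k from (x, z) to 𝒞 equals (1/√2)·dist(C x − z, S), where dist(y, S) = inf_{ỹ ∈ S} ‖y − ỹ‖. -/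
/-!
Write `y = C x - z`. Moving `(x, z)` by `(d, e)` moves `y` by `C d - e`; since `C` has
orthonormal rows, `‖C d‖ ≤ ‖d‖`, hence `‖C d - e‖² ≤ 2 (‖d‖² + ‖e‖²)` and reaching `𝒞` costs at
least `dist(y, S) / √2`. Conversely, for `ỹ ∈ S` split the defect `w = y - ỹ` evenly:
`(x - Cᵀ w / 2, z + w / 2)` lies in `𝒞` (as `C Cᵀ = 1`) at distance exactly `‖w‖ / √2`.
-/

open Matrix

namespace Matrix

variable {m n R : Type*} [Fintype m] [DecidableEq m] [Fintype n]

theorem sum_sub_sq_eq_sub_dotProduct_sub [CommRing R] (u v : n → R) :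
    ∑ i, (u i - v i) ^ 2 = (u - v) ⬝ᵥ (u - v) := by
  simp only [dotProduct, Pi.sub_apply, sq]

theorem transpose_mulVec_dotProduct_self [CommSemiring R] {C : Matrix m n R} (hC : C * Cᵀ = 1)
    (w : m → R) : Cᵀ *ᵥ w ⬝ᵥ Cᵀ *ᵥ w = w ⬝ᵥ w := by
  rw [dotProduct_mulVec, vecMul_transpose, mulVec_mulVec, hC, one_mulVec]

section Ordered

variable [CommRing R] [LinearOrder R] [IsStrictOrderedRing R]

theorem dotProduct_self_nonneg (v : n → R) : 0 ≤ v ⬝ᵥ v :=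
  Finset.sum_nonneg fun i _ => mul_self_nonneg (v i)

theorem sub_dotProduct_sub_le (u v : n → R) : (u - v) ⬝ᵥ (u - v) ≤ 2 * (u ⬝ᵥ u + v ⬝ᵥ v) := by
  have h := dotProduct_self_nonneg (u + v)
  simp only [add_dotProduct, dotProduct_add, sub_dotProduct, dotProduct_sub,
    dotProduct_comm v u] at h ⊢
  linarith

theorem mulVec_dotProduct_self_le {C : Matrix m n R} (hC : C * Cᵀ = 1) (d : n → R) :
    C *ᵥ d ⬝ᵥ C *ᵥ d ≤ d ⬝ᵥ d := by
  -- `Cᵀ C` is the orthogonal projection onto the row space, so `|d|² - |C d|² = |d - Cᵀ C d|²`.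
  have h := dotProduct_self_nonneg (d - Cᵀ *ᵥ (C *ᵥ d))
  have hcross : d ⬝ᵥ Cᵀ *ᵥ (C *ᵥ d) = C *ᵥ d ⬝ᵥ C *ᵥ d := by
    rw [dotProduct_mulVec, vecMul_transpose]
  rw [sub_dotProduct, dotProduct_sub, dotProduct_sub, transpose_mulVec_dotProduct_self hC,
    dotProduct_comm (Cᵀ *ᵥ _) d, hcross] at h
  linarith

theorem mulVec_sub_dotProduct_self_le {C : Matrix m n R} (hC : C * Cᵀ = 1) (d : n → R)
    (e : m → R) : (C *ᵥ d - e) ⬝ᵥ (C *ᵥ d - e) ≤ 2 * (d ⬝ᵥ d + e ⬝ᵥ e) := by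
  linarith [sub_dotProduct_sub_le (C *ᵥ d) e, mulVec_dotProduct_self_le hC d]

end Ordered

section Field

variable [Field R] [CharZero R] {C : Matrix m n R}

theorem mulVec_sub_half_transpose_mulVec (hC : C * Cᵀ = 1) (x : n → R) (z w : m → R) :
    C *ᵥ (x - (2⁻¹ : R) • Cᵀ *ᵥ w) - (z + (2⁻¹ : R) • w) = C *ᵥ x - z - w := by
  rw [mulVec_sub, mulVec_smul, mulVec_mulVec, hC, one_mulVec]
  module

theorem half_transpose_mulVec_dotProduct_self_add (hC : C * Cᵀ = 1) (w : m → R) :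
    ((2⁻¹ : R) • Cᵀ *ᵥ w) ⬝ᵥ ((2⁻¹ : R) • Cᵀ *ᵥ w) + ((2⁻¹ : R) • w) ⬝ᵥ ((2⁻¹ : R) • w) =
      2⁻¹ * (w ⬝ᵥ w) := by
  simp only [smul_dotProduct, dotProduct_smul, transpose_mulVec_dotProduct_self hC, smul_eq_mul]
  field_simp
  ring

end Field

end Matrix

theorem Real.sqrt_inv_two_mul (s : ℝ) : √(2⁻¹ * s) = 1 / √2 * √s := by
  rw [Real.sqrt_mul (by norm_num), Real.sqrt_inv, one_div]

theorem stmt7_general (n k : ℕ) (C : Matrix (Fin k) (Fin n) ℝ) (hC : C * Cᵀ = 1)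
    (S : Set (Fin k → ℝ))
    (x : Fin n → ℝ) (z : Fin k → ℝ) :
    sInf {r : ℝ | ∃ (x' : Fin n → ℝ) (z' : Fin k → ℝ), C.mulVec x' - z' ∈ S ∧
        r = Real.sqrt ((∑ i, (x i - x' i) ^ 2) + ∑ j, (z j - z' j) ^ 2)}
      = (1 / Real.sqrt 2) *
          sInf {r : ℝ | ∃ y ∈ S, r = Real.sqrt (∑ j, ((C.mulVec x - z) j - y j) ^ 2)} := by
  simp only [sum_sub_sq_eq_sub_dotProduct_sub]
  rw [← smul_eq_mul, ← Real.sInf_smul_of_nonneg (by positivity)]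
  apply csInf_eq_csInf_of_forall_exists_le
  · rintro _ ⟨x', z', hmem, rfl⟩
    refine ⟨_, ⟨_, ⟨_, hmem, rfl⟩, rfl⟩, ?_⟩
    simp only [smul_eq_mul, ← Real.sqrt_inv_two_mul]
    refine Real.sqrt_le_sqrt ?_
    have h := mulVec_sub_dotProduct_self_le hC (x - x') (z - z')
    rw [mulVec_sub, sub_sub_sub_comm] at h
    linarith
  · rintro _ ⟨_, ⟨y, hy, rfl⟩, rfl⟩
    set w := C *ᵥ x - z - y
    refine ⟨_, ⟨x - (2⁻¹ : ℝ) • Cᵀ *ᵥ w, z + (2⁻¹ : ℝ) • w, ?_, rfl⟩, le_of_eq ?_⟩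
    · rwa [mulVec_sub_half_transpose_mulVec hC, sub_sub_cancel]
    · rw [sub_sub_cancel, sub_add_cancel_left, neg_dotProduct, dotProduct_neg, neg_neg,
        half_transpose_mulVec_dotProduct_self_add hC, Real.sqrt_inv_two_mul]
      rfl

/-- the Euclidean distance in the lifted space `ℝⁿ × ℝᵏ` from `(x, z)`
to the lifted unsafe set `𝒞 = {(x', z') : C x' − z' ∈ S}` equals
`(1/√2) · dist(C x − z, S)`, for a matrix `C` with orthonormal rows. -/
theorem stmt7 (n k : ℕ) (C : Matrix (Fin k) (Fin n) ℝ) (hC : C * Cᵀ = 1)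
    (S : Set (Fin k → ℝ)) (hS : S.Nonempty) (hScl : IsClosed S)
    (x : Fin n → ℝ) (z : Fin k → ℝ) :
    sInf {r : ℝ | ∃ (x' : Fin n → ℝ) (z' : Fin k → ℝ), C.mulVec x' - z' ∈ S ∧
        r = Real.sqrt ((∑ i, (x i - x' i) ^ 2) + ∑ j, (z j - z' j) ^ 2)}
      = (1 / Real.sqrt 2) *
          sInf {r : ℝ | ∃ y ∈ S, r = Real.sqrt (∑ j, ((C.mulVec x - z) j - y j) ^ 2)} :=
  stmt7_general n k C hC S x z
end

section
/- Let C ∈ ℝ^{k×n} have orthonormal rows and let r > 0. Define the lifted unsafe set 𝒞 = { (x, z) ∈ ℝ^n × ℝ^k : ‖C x − z‖ ≤ r }. Then for every (x, z), the Euclidean distance from (x, z) to 𝒞 equals (1/√2)·(‖C x − z‖ − r)_+, where (s)_+ = max(s, 0). -/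
/-!
Write `v = C x - z`. For `(x', z')` in the lifted set, the triangle inequality and `‖C u‖ ≤ ‖u‖`
give `‖v‖ ≤ r + ‖x - x'‖ + ‖z - z'‖ ≤ r + √2 · dist((x, z), (x', z'))`, hence the lower bound.
It is attained by moving from `(x, z)` along `s • (-Cᵀ v, v)`: this shrinks `v` by the factor
`1 - 2 s` at distance `√2 s ‖v‖`, and `s = (‖v‖ - r) / (2 ‖v‖)` lands on the boundary.
Orthonormal rows make `C` a contraction with the isometric right inverse `Cᵀ`.
-/

open Matrix

theorem add_le_sqrt_two_mul_sqrt_sq_add_sq (a b : ℝ) : a + b ≤ √2 * √(a ^ 2 + b ^ 2) := by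
  rw [← Real.sqrt_mul zero_le_two]
  apply Real.le_sqrt_of_sq_le
  nlinarith [sq_nonneg (a - b)]

section Lifted

variable {E F : Type*} [NormedAddCommGroup E] [NormedSpace ℝ E]
  [NormedAddCommGroup F] [NormedSpace ℝ F]

theorem norm_apply_sub_le_add_sqrt_two_mul {T : E →L[ℝ] F} (hT : ∀ u, ‖T u‖ ≤ ‖u‖)
    (x x' : E) (z z' : F) :
    ‖T x - z‖ ≤ ‖T x' - z'‖ + √2 * √(‖x - x'‖ ^ 2 + ‖z - z'‖ ^ 2) :=
  calc ‖T x - z‖ = ‖(T x' - z') + (T (x - x') - (z - z'))‖ := by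
        rw [map_sub]; congr 1; abel
    _ ≤ ‖T x' - z'‖ + (‖T (x - x')‖ + ‖z - z'‖) :=
        (norm_add_le _ _).trans (by gcongr; exact norm_sub_le _ _)
    _ ≤ ‖T x' - z'‖ + (‖x - x'‖ + ‖z - z'‖) := by gcongr; exact hT _
    _ ≤ _ := by gcongr; exact add_le_sqrt_two_mul_sqrt_sq_add_sq _ _

theorem exists_norm_apply_sub_le_sqrt_eq {T : E →L[ℝ] F} {S : F → E}
    (hTS : ∀ w, T (S w) = w) (hS : ∀ w, ‖S w‖ = ‖w‖) {r : ℝ} (hr : 0 ≤ r) {x : E} {z : F}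
    (hrd : r < ‖T x - z‖) :
    ∃ x' z', ‖T x' - z'‖ ≤ r ∧
      √(‖x - x'‖ ^ 2 + ‖z - z'‖ ^ 2) = 1 / √2 * (‖T x - z‖ - r) := by
  set v := T x - z
  set d := ‖v‖
  have hd : 0 < d := hr.trans_lt hrd
  set s := (d - r) / (2 * d) with hs_def
  have hs : 0 ≤ s := by positivity
  refine ⟨x - S (s • v), z + s • v, le_of_eq ?_, ?_⟩
  · have hv : T (x - S (s • v)) - (z + s • v) = (r / d) • v := by
      rw [map_sub, hTS]
      have : r / d = 1 - 2 * s := by rw [hs_def]; field_simp; ring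
      rw [this]; module
    rw [hv, norm_smul, Real.norm_of_nonneg (by positivity), div_mul_cancel₀ _ hd.ne']
  · have hx : ‖x - (x - S (s • v))‖ = s * d := by
      rw [sub_sub_cancel, hS, norm_smul, Real.norm_of_nonneg hs]
    have hz : ‖z - (z + s • v)‖ = s * d := by
      rw [sub_add_cancel_left, norm_neg, norm_smul, Real.norm_of_nonneg hs]
    rw [hx, hz, ← two_mul, Real.sqrt_mul zero_le_two, Real.sqrt_sq (by positivity), hs_def]
    field_simp
    rw [Real.sq_sqrt zero_le_two, mul_comm]

theorem isLeast_sqrt_dist_lifted_ball {T : E →L[ℝ] F} (hT : ∀ u, ‖T u‖ ≤ ‖u‖) {S : F → E}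
    (hTS : ∀ w, T (S w) = w) (hS : ∀ w, ‖S w‖ = ‖w‖) {r : ℝ} (hr : 0 ≤ r) (x : E) (z : F) :
    IsLeast {t | ∃ x' z', ‖T x' - z'‖ ≤ r ∧ t = √(‖x - x'‖ ^ 2 + ‖z - z'‖ ^ 2)}
      (1 / √2 * max (‖T x - z‖ - r) 0) := by
  constructor
  · rcases le_or_gt (‖T x - z‖) r with hle | hlt
    · exact ⟨x, z, hle, by simp [max_eq_right (sub_nonpos.2 hle)]⟩
    · obtain ⟨x', z', hfeas, hdist⟩ := exists_norm_apply_sub_le_sqrt_eq hTS hS hr hlt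
      exact ⟨x', z', hfeas, by rw [hdist, max_eq_left (sub_nonneg.2 hlt.le)]⟩
  · rintro t ⟨x', z', hfeas, rfl⟩
    have := norm_apply_sub_le_add_sqrt_two_mul hT x x' z z'
    rw [one_div, inv_mul_le_iff₀ (by positivity)]
    exact max_le (by linarith) (by positivity)

end Lifted

open scoped InnerProduct

namespace ContinuousLinearMap

variable {𝕜 E F : Type*} [RCLike 𝕜] [NormedAddCommGroup E] [InnerProductSpace 𝕜 E]
  [CompleteSpace E] [NormedAddCommGroup F] [InnerProductSpace 𝕜 F] [CompleteSpace F]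
  {T : E →L[𝕜] F}

theorem norm_adjoint_apply_of_comp_adjoint_eq_one (hT : T ∘L T† = 1) (w : F) :
    ‖(T†) w‖ = ‖w‖ :=
  (norm_map_iff_adjoint_comp_self (T†)).2 (by rwa [adjoint_adjoint]) w

theorem norm_apply_le_of_comp_adjoint_eq_one (hT : T ∘L T† = 1) (u : E) : ‖T u‖ ≤ ‖u‖ := by
  have hT_norm : ‖T‖ ≤ 1 := by
    rw [← LinearIsometryEquiv.norm_map adjoint T]
    exact opNorm_le_bound _ zero_le_one fun w ↦ by
      rw [norm_adjoint_apply_of_comp_adjoint_eq_one hT, one_mul]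
  simpa using T.le_of_opNorm_le hT_norm u

end ContinuousLinearMap

theorem Matrix.toEuclideanLin_comp_adjoint_eq_one {𝕜 : Type*} [RCLike 𝕜] {m n : Type*}
    [Fintype m] [DecidableEq m] [Fintype n] [DecidableEq n] {C : Matrix m n 𝕜}
    (hC : C * Cᴴ = 1) :
    (toEuclideanLin C).toContinuousLinearMap ∘L (toEuclideanLin C).toContinuousLinearMap† = 1 := by
  rw [← LinearMap.adjoint_toContinuousLinearMap, ← toEuclideanLin_conjTranspose_eq_adjoint]
  ext w
  simp [hC]

theorem EuclideanSpace.norm_toLp_eq_sqrt_sum_sq {ι : Type*} [Fintype ι] (v : ι → ℝ) :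
    ‖WithLp.toLp 2 v‖ = √(∑ i, v i ^ 2) := by
  simp [EuclideanSpace.norm_eq]

/-- the Euclidean distance in the lifted space `ℝⁿ × ℝᵏ` from `(x, z)`
to the circular lifted unsafe set `𝒞 = {(x', z') : ‖C x' − z'‖ ≤ r}` equals
`(1/√2) · (‖C x − z‖ − r)₊`, for a matrix `C` with orthonormal rows. -/
theorem stmt8 (n k : ℕ) (C : Matrix (Fin k) (Fin n) ℝ) (hC : C * Cᵀ = 1)
    (r : ℝ) (hr : 0 < r) (x : Fin n → ℝ) (z : Fin k → ℝ) :
    sInf {t : ℝ | ∃ (x' : Fin n → ℝ) (z' : Fin k → ℝ),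
        Real.sqrt (∑ j, (C.mulVec x' - z') j ^ 2) ≤ r ∧
        t = Real.sqrt ((∑ i, (x i - x' i) ^ 2) + ∑ j, (z j - z' j) ^ 2)}
      = (1 / Real.sqrt 2) *
          max (Real.sqrt (∑ j, (C.mulVec x - z) j ^ 2) - r) 0 := by
  rw [← conjTranspose_eq_transpose_of_trivial] at hC
  have hTT := toEuclideanLin_comp_adjoint_eq_one hC
  set T := (toEuclideanLin C).toContinuousLinearMap
  have hleast := isLeast_sqrt_dist_lifted_ball
    (T.norm_apply_le_of_comp_adjoint_eq_one hTT) (DFunLike.congr_fun hTT)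
    (T.norm_adjoint_apply_of_comp_adjoint_eq_one hTT) hr.le (WithLp.toLp 2 x) (WithLp.toLp 2 z)
  have hnorm (x' : Fin n → ℝ) (z' : Fin k → ℝ) :
      ‖T (WithLp.toLp 2 x') - WithLp.toLp 2 z'‖ = √(∑ j, (C *ᵥ x' - z') j ^ 2) :=
    EuclideanSpace.norm_toLp_eq_sqrt_sum_sq _
  have hdist (x' : Fin n → ℝ) (z' : Fin k → ℝ) :
      √(‖WithLp.toLp 2 x - WithLp.toLp 2 x'‖ ^ 2 + ‖WithLp.toLp 2 z - WithLp.toLp 2 z'‖ ^ 2) =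
        √(∑ i, (x i - x' i) ^ 2 + ∑ j, (z j - z' j) ^ 2) := by
    simp [EuclideanSpace.real_norm_sq_eq]
  rw [← hnorm, ← hleast.csInf_eq]
  congr 1
  ext t
  constructor
  · rintro ⟨x', z', hfeas, rfl⟩
    exact ⟨WithLp.toLp 2 x', WithLp.toLp 2 z', by rwa [hnorm], (hdist x' z').symm⟩
  · rintro ⟨x', z', hfeas, rfl⟩
    exact ⟨x'.ofLp, z'.ofLp, by rwa [← hnorm], hdist _ _⟩
end
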